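/- For a nonempty compact Λ ⊆ Δ_n^↓ with maximal-element set Λ_max, and for any vectors a, b ∈ ℝ^n, the union over k ∈ Λ of the intervals [k·a, k·b] equals the union over k ∈ Λ_max of the same intervals, provided a is sorted nondecreasingly and b nonincreasingly (so that k·a ≤ k·b and x ≺ y implies [x·a, x·b] ⊆ [y·a, y·b]). -/
import Mathlib

open Finset Set

/-- Partial sum of the first `k` components. -/
def pSum {n : ℕ} (x : Fin n → ℝ) (k : ℕ) : ℝ :=
  ∑ i : Fin n, if (i : ℕ) < k then x i else 0

/-- Majorization: all partial sums of `x` are bounded by those of `y`. -/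
def Maj {n : ℕ} (x y : Fin n → ℝ) : Prop :=
  ∀ k : ℕ, pSum x k ≤ pSum y k

/-- The ordered probability simplex Δ_n^↓. -/
def OrderedSimplex (n : ℕ) : Set (Fin n → ℝ) :=
  {x | (∀ i j : Fin n, i ≤ j → x j ≤ x i) ∧ (∀ i, 0 ≤ x i) ∧ ∑ i, x i = 1}

/-- Euclidean dot product on `Fin n → ℝ`. -/
def dotp {n : ℕ} (x v : Fin n → ℝ) : ℝ := ∑ i, x i * v i

/-- Extension of a `Fin n`-vector to `ℕ` by zero. -/
def extz {n : ℕ} (x : Fin n → ℝ) (i : ℕ) : ℝ := if h : i < n then x ⟨i, h⟩ else 0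

lemma pSum_eq_range {n : ℕ} (x : Fin n → ℝ) (k : ℕ) :
    pSum x k = ∑ i ∈ Finset.range k, extz x i := by
  have h1 : pSum x k = ∑ i ∈ Finset.range n, (if i < k then extz x i else 0) := by
    rw [pSum, ← Fin.sum_univ_eq_sum_range (fun i => if i < k then extz x i else 0) n]
    apply Finset.sum_congr rfl
    intro i _
    simp [extz, i.isLt]
  rw [h1]
  set N := max k n with hN
  have h2 : ∑ i ∈ Finset.range n, (if i < k then extz x i else 0)
      = ∑ i ∈ Finset.range N, (if i < k then extz x i else 0) := by
    apply Finset.sum_subset (Finset.range_subset_range.2 (le_max_right _ _))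
    intro i _ hi
    simp only [Finset.mem_range, not_lt] at hi
    simp [extz, Nat.not_lt.2 hi, dif_neg (Nat.not_lt.2 hi)]
  have h3 : ∑ i ∈ Finset.range k, extz x i
      = ∑ i ∈ Finset.range N, (if i < k then extz x i else 0) := by
    apply Finset.sum_subset_zero_on_sdiff (Finset.range_subset_range.2 (le_max_left _ _))
    · intro i hi
      simp only [Finset.mem_sdiff, Finset.mem_range, not_lt] at hi
      simp [Nat.not_lt.2 hi.2]
    · intro i hi
      simp only [Finset.mem_range] at hi
      simp [hi]
  rw [h2, ← h3]

lemma pSum_succ {n : ℕ} (x : Fin n → ℝ) (k : ℕ) :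
    pSum x (k + 1) = pSum x k + extz x k := by
  rw [pSum_eq_range, pSum_eq_range, Finset.sum_range_succ]

lemma pSum_total {n : ℕ} (x : Fin n → ℝ) : pSum x n = ∑ i, x i := by
  rw [pSum]
  apply Finset.sum_congr rfl
  intro i _
  simp [i.isLt]

lemma dotp_eq_range {n : ℕ} (x v : Fin n → ℝ) :
    dotp x v = ∑ i ∈ Finset.range n, extz x i * extz v i := by
  rw [dotp, ← Fin.sum_univ_eq_sum_range (fun i => extz x i * extz v i) n]
  apply Finset.sum_congr rfl
  intro i _
  simp [extz, i.isLt]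

/-- Key monotonicity: majorization (with equal totals) increases the dot product with
an antitone vector. -/
lemma dotp_le_of_maj {n : ℕ} {x y : Fin n → ℝ} (hmaj : Maj x y)
    (hsum : ∑ i, x i = ∑ i, y i) {b : Fin n → ℝ} (hb : Antitone b) :
    dotp x b ≤ dotp y b := by
  rcases Nat.eq_zero_or_pos n with hn | hn
  · subst hn; simp [dotp]
  set d : ℕ → ℝ := fun i => extz y i - extz x i with hd
  set B : ℕ → ℝ := fun i => extz b i with hB
  have hG : ∀ k, ∑ i ∈ Finset.range k, d i = pSum y k - pSum x k := by
    intro k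
    rw [pSum_eq_range, pSum_eq_range, ← Finset.sum_sub_distrib]
  have key : ∑ i ∈ Finset.range n, B i • d i = dotp y b - dotp x b := by
    simp only [smul_eq_mul, hd, hB]
    rw [dotp_eq_range, dotp_eq_range, ← Finset.sum_sub_distrib]
    apply Finset.sum_congr rfl
    intro i _
    ring
  have byparts := Finset.sum_range_by_parts B d n
  have hDn : ∑ i ∈ Finset.range n, d i = 0 := by
    rw [hG, pSum_total, pSum_total, hsum, sub_self]
  rw [hDn, smul_zero, zero_sub, key] at byparts
  have hterm : ∀ i ∈ Finset.range (n - 1),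
      (0:ℝ) ≤ -((B (i + 1) - B i) • ∑ j ∈ Finset.range (i + 1), d j) := by
    intro i hi
    simp only [Finset.mem_range] at hi
    have hi1 : i + 1 < n := by omega
    have hii : i < n := by omega
    have hBle : B (i + 1) ≤ B i := by
      simp only [hB, extz, dif_pos hi1, dif_pos hii]
      exact hb (by exact_mod_cast Nat.le_succ i)
    have hDpos : 0 ≤ ∑ j ∈ Finset.range (i + 1), d j := by
      rw [hG]; linarith [hmaj (i + 1)]
    have := mul_nonneg (sub_nonneg.2 hBle) hDpos
    simp only [smul_eq_mul]
    nlinarith [mul_nonneg (sub_nonneg.2 hBle) hDpos]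
  have : (0:ℝ) ≤ -∑ i ∈ Finset.range (n - 1), (B (i + 1) - B i) • ∑ j ∈ Finset.range (i + 1), d j := by
    rw [neg_nonneg]
    apply Finset.sum_nonpos
    intro i hi
    have := hterm i hi
    linarith
  linarith [byparts.symm ▸ this]

lemma dotp_ge_of_maj {n : ℕ} {x y : Fin n → ℝ} (hmaj : Maj x y)
    (hsum : ∑ i, x i = ∑ i, y i) {a : Fin n → ℝ} (ha : Monotone a) :
    dotp y a ≤ dotp x a := by
  have hb : Antitone (fun i => -(a i)) := fun i j hij => neg_le_neg (ha hij)
  have h := dotp_le_of_maj hmaj hsum hb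
  have e1 : dotp x (fun i => -(a i)) = -dotp x a := by
    simp [dotp, Finset.sum_neg_distrib, mul_neg]
  have e2 : dotp y (fun i => -(a i)) = -dotp y a := by
    simp [dotp, Finset.sum_neg_distrib, mul_neg]
  rw [e1, e2] at h
  linarith

/-- pSum is continuous in the vector. -/
lemma continuous_pSum {n : ℕ} (k : ℕ) : Continuous (fun z : Fin n → ℝ => pSum z k) := by
  unfold pSum
  apply continuous_finset_sum
  intro i _
  by_cases h : (i : ℕ) < k
  · simpa [h] using continuous_apply i
  · simp [h]; exact continuous_const

/-- Antisymmetry of Maj when partial sums up to `n` agree. -/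
lemma maj_antisymm {n : ℕ} {x y : Fin n → ℝ}
    (h : ∀ k ≤ n, pSum x k = pSum y k) : x = y := by
  funext i
  have h1 := h i (le_of_lt i.isLt)
  have h2 := h (i + 1) i.isLt
  have e1 := pSum_succ x i
  have e2 := pSum_succ y i
  have : extz x (i : ℕ) = extz y (i : ℕ) := by
    rw [e1, e2, h1] at h2; linarith
  simpa [extz, i.isLt] using this

lemma exists_maximal {n : ℕ} (Λ : Set (Fin n → ℝ))
    (hc : IsCompact Λ) {k : Fin n → ℝ} (hk : k ∈ Λ) :
    ∃ M ∈ Λ, Maj k M ∧ ∀ z ∈ Λ, Maj M z → z = M := by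
  set S : Set (Fin n → ℝ) := Λ ∩ {z | Maj k z} with hS
  have hSclosed : IsClosed {z : Fin n → ℝ | Maj k z} := by
    have : {z : Fin n → ℝ | Maj k z} = ⋂ j : ℕ, {z | pSum k j ≤ pSum z j} := by
      ext z; simp [Maj, Set.mem_iInter]
    rw [this]
    exact isClosed_iInter fun j => isClosed_le continuous_const (continuous_pSum j)
  have hScompact : IsCompact S := hc.inter_right hSclosed
  have hSne : S.Nonempty := ⟨k, hk, fun j => le_refl _⟩
  set F : (Fin n → ℝ) → ℝ := fun z => ∑ j ∈ Finset.range (n + 1), pSum z j with hF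
  have hFcont : Continuous F := continuous_finset_sum _ fun j _ => continuous_pSum j
  obtain ⟨M, hMS, hmax⟩ := hScompact.exists_isMaxOn hSne hFcont.continuousOn
  refine ⟨M, hMS.1, hMS.2, ?_⟩
  intro z hz hMz
  have hzS : z ∈ S := ⟨hz, fun j => le_trans (hMS.2 j) (hMz j)⟩
  have hFle : F z ≤ F M := hmax hzS
  have hFge : F M ≤ F z := Finset.sum_le_sum fun j _ => hMz j
  have hFeq : F M = F z := le_antisymm hFge hFle
  have hall : ∀ j ∈ Finset.range (n + 1), pSum M j = pSum z j :=
    (Finset.sum_eq_sum_iff_of_le fun j _ => hMz j).1 hFeq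
  apply maj_antisymm
  intro j hj
  exact (hall j (Finset.mem_range.2 (Nat.lt_succ_of_le hj))).symm

theorem stmt_6 {n : ℕ} (Λ : Set (Fin n → ℝ))
    (hΛ : Λ ⊆ OrderedSimplex n) (hne : Λ.Nonempty) (hc : IsCompact Λ)
    (a b : Fin n → ℝ) (ha : Monotone a) (hb : Antitone b) :
    (⋃ k ∈ Λ, Set.Icc (dotp k a) (dotp k b))
      = ⋃ k ∈ {M | M ∈ Λ ∧ ∀ z ∈ Λ, Maj M z → z = M},
          Set.Icc (dotp k a) (dotp k b) := by
  apply Set.Subset.antisymm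
  · intro t ht
    simp only [Set.mem_iUnion, exists_prop] at ht ⊢
    obtain ⟨k, hk, hkt⟩ := ht
    obtain ⟨M, hMΛ, hkM, hMmax⟩ := exists_maximal Λ hc hk
    refine ⟨M, ⟨hMΛ, hMmax⟩, ?_⟩
    have hsum : ∑ i, k i = ∑ i, M i := by
      rw [(hΛ hk).2.2, (hΛ hMΛ).2.2]
    have h1 : dotp M a ≤ dotp k a := dotp_ge_of_maj hkM hsum ha
    have h2 : dotp k b ≤ dotp M b := dotp_le_of_maj hkM hsum hb
    exact ⟨le_trans h1 hkt.1, le_trans hkt.2 h2⟩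
  · apply Set.iUnion₂_subset
    intro k hk
    exact Set.subset_iUnion₂ (s := fun k _ => Set.Icc (dotp k a) (dotp k b)) k hk.1
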